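/- arXiv:1608.05160 — 2 statements merged into one kernel-verified Lean document; each statement's English description precedes it below -/
import Mathlib

section
/- For ordinals below ε₀ in Cantor normal form, if γ < ε₀ is a limit ordinal, β < γ, and x ≥ mc(β)+1, then γ[x] > β. -/
open Ordinal

namespace FGH

/-- `predO α = some β` iff the ordinal notation `α` denotes the successor `β + 1`. -/
def predO : ONote → Option ONote
  | ONote.zero => none
  | ONote.oadd e n a =>
    match a with
    | ONote.oadd e₁ n₁ a₁ => (predO (ONote.oadd e₁ n₁ a₁)).map (ONote.oadd e n)
    | ONote.zero =>
      match e with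
      | ONote.oadd _ _ _ => none
      | ONote.zero =>
        match h : (n : ℕ) with
        | 1 => some ONote.zero
        | (k + 2) => some (ONote.oadd ONote.zero ⟨k + 1, by omega⟩ ONote.zero)
        | 0 => none  -- impossible since `n : ℕ+`

/-- The standard fundamental sequence on Cantor normal forms:
`(δ + ω^(β+1))[x] = δ + ω^β·x` and `(δ + ω^λ)[x] = δ + ω^(λ[x])` for `λ` a limit.
(Junk values on non-limit notations.) -/
def fundSeq : ONote → ℕ → ONote
  | ONote.zero, _ => ONote.zero
  | ONote.oadd e n a, x =>
    match a with
    | ONote.oadd e₁ n₁ a₁ => ONote.oadd e n (fundSeq (ONote.oadd e₁ n₁ a₁) x)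
    | ONote.zero =>
      let tail : ONote :=
        match predO e with
        | some e' => if h : 0 < x then ONote.oadd e' ⟨x, h⟩ ONote.zero else ONote.zero
        | none => ONote.oadd (fundSeq e x) 1 ONote.zero
      if h : 1 < (n : ℕ) then ONote.oadd e ⟨(n : ℕ) - 1, by omega⟩ tail
      else tail

/-- `γ` is a limit ordinal notation. -/
def IsLim (γ : ONote) : Prop := γ.repr ≠ 0 ∧ ∀ a < γ.repr, Order.succ a < γ.repr

/-- Maximal coefficient: `mc 0 = 0`, `mc (ω^α₀·a₀ + ⋯ + ω^αₙ·aₙ) = max_i {mc αᵢ, aᵢ}`. -/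
def mc : ONote → ℕ
  | ONote.zero => 0
  | ONote.oadd e n a => max (max (mc e) (n : ℕ)) (mc a)

/-- One computation step for the fast growing hierarchy relative to `f`. -/
def Kstep (f : ℕ → ℕ) (p : List ONote × ℕ) : List ONote × ℕ :=
  match p.1.getLast? with
  | none => p
  | some α =>
    let t := p.1.dropLast
    if α = ONote.zero then (t, f p.2)
    else
      match predO α with
      | some β => (t ++ List.replicate (p.2 + 1) β, 1)
      | none => (t ++ [fundSeq α p.2], p.2)

/-- The measure `h(α₀ ⋯ αₙ, x) = ω^α₀ + ⋯ + ω^αₙ`. -/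
noncomputable def hMeasure (p : List ONote × ℕ) : Ordinal :=
  (p.1.map (fun a => omega0 ^ a.repr)).sum

/-- `Fdef f α x y` : the derivation of `F^f_α(x)` terminates with value `y`. -/
def Fdef (f : ℕ → ℕ) (α : ONote) (x y : ℕ) : Prop :=
  ∃ n : ℕ, (Kstep f)^[n] ([α], x) = ([], y)

/-- Relational iterate: `FdefIter f α k a b` means `(F^f_α)^(k)(a) = b`. -/
def FdefIter (f : ℕ → ℕ) (α : ONote) : ℕ → ℕ → ℕ → Prop
  | 0, a, b => b = a
  | (k + 1), a, b => ∃ c, FdefIter f α k a c ∧ Fdef f α c b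

/-- The tower of `ω`s: `ω₀ = 0`, `ω_{n+1} = ω^{ω_n}`. -/
def omegaTower : ℕ → ONote
  | 0 => ONote.zero
  | (d + 1) => ONote.oadd (omegaTower d) 1 ONote.zero

end FGH



namespace FGH

lemma repr_oadd' (e : ONote) (n : ℕ+) (a : ONote) :
    (ONote.oadd e n a).repr = omega0 ^ e.repr * n + a.repr := rfl

lemma predO_eq_some : ∀ {α α' : ONote}, α.NF → predO α = some α' → α.repr = α'.repr + 1
  | ONote.zero, _, _, hp => by simp [predO] at hp
  | ONote.oadd e n (ONote.oadd e₁ n₁ a₁), α', hnf, hp => by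
    simp only [predO, Option.map_eq_some_iff] at hp
    obtain ⟨a₂, ha₂, rfl⟩ := hp
    have := predO_eq_some hnf.snd ha₂
    simp only [repr_oadd', this, add_assoc]
  | ONote.oadd (ONote.oadd e₂ n₂ a₂) n ONote.zero, α', hnf, hp => by
    simp [predO] at hp
  | ONote.oadd ONote.zero n ONote.zero, α', hnf, hp => by
    obtain ⟨(_ | (_ | k)), hn⟩ := n
    · omega
    · simp [predO] at hp
      subst hp
      simp [repr_oadd', ONote.repr]
    · simp [predO] at hp
      subst hp
      simp [repr_oadd', ONote.repr]

end FGH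


namespace FGH

lemma oadd_repr_pos (e : ONote) (n : ℕ+) (a : ONote) : 0 < (ONote.oadd e n a).repr := by
  calc (0:Ordinal) < omega0 ^ e.repr := opow_pos _ omega0_pos
  _ ≤ _ := ONote.omega0_le_oadd e n a

lemma isLim_iff_repr {γ : ONote} : IsLim γ ↔ Order.IsSuccLimit γ.repr := by
  rw [Ordinal.isSuccLimit_iff, Order.isSuccPrelimit_iff_succ_lt]; rfl

lemma predO_eq_none : ∀ {α : ONote}, α.NF → α ≠ ONote.zero → predO α = none →
    Order.IsSuccLimit α.repr
  | ONote.zero, _, h0, _ => absurd rfl h0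
  | ONote.oadd e n (ONote.oadd e₁ n₁ a₁), hnf, _, hp => by
    simp only [predO, Option.map_eq_none_iff] at hp
    have := predO_eq_none hnf.snd (by simp) hp
    exact Ordinal.isSuccLimit_add _ this
  | ONote.oadd (ONote.oadd e₂ n₂ a₂) n ONote.zero, hnf, _, hp => by
    show Order.IsSuccLimit ((omega0 ^ (ONote.oadd e₂ n₂ a₂).repr * (n:ℕ) + 0 : Ordinal))
    rw [add_zero]
    refine Ordinal.isSuccLimit_mul_left (Ordinal.isSuccLimit_opow_left isSuccLimit_omega0 ?_) ?_
    · exact (oadd_repr_pos _ _ _).ne'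
    · exact_mod_cast n.pos
  | ONote.oadd ONote.zero n ONote.zero, hnf, _, hp => by
    obtain ⟨(_ | (_ | k)), hn⟩ := n
    · omega
    · simp [predO] at hp
    · simp [predO] at hp

end FGH


namespace FGH

lemma oadd_repr_lt (e : ONote) (n : ℕ+) (a : ONote) (h : (ONote.oadd e n a).NF) :
    (ONote.oadd e n a).repr < omega0 ^ e.repr * ((n : ℕ) + 1) := by
  have hb : a.repr < omega0 ^ e.repr := h.snd'.repr_lt
  calc (ONote.oadd e n a).repr = omega0 ^ e.repr * (n : ℕ) + a.repr := rfl
    _ < omega0 ^ e.repr * (n : ℕ) + omega0 ^ e.repr := by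
        exact (add_lt_add_iff_left _).2 hb
    _ = omega0 ^ e.repr * ((n : ℕ) + 1) := by rw [mul_add_one]

lemma oadd_repr_lt_opow_succ (e : ONote) (n : ℕ+) (a : ONote) (h : (ONote.oadd e n a).NF) :
    (ONote.oadd e n a).repr < omega0 ^ (e.repr + 1) := by
  refine (oadd_repr_lt e n a h).trans_le ?_
  have : omega0 ^ (e.repr + 1) = omega0 ^ e.repr * omega0 := by
    rw [← opow_succ]; rfl
  rw [this]
  exact mul_le_mul_right (le_of_lt (by exact_mod_cast nat_lt_omega0 ((n:ℕ)+1))) _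

lemma sandwich {e₁ : ONote} {n₁ : ℕ+} {b : ONote} (hβ : (ONote.oadd e₁ n₁ b).NF)
    {c : Ordinal} {m : ℕ} (hm : 0 < m)
    (hge : omega0 ^ c * m ≤ (ONote.oadd e₁ n₁ b).repr)
    (hlt : (ONote.oadd e₁ n₁ b).repr < omega0 ^ c * (m + 1)) :
    e₁.repr = c ∧ (n₁ : ℕ) = m ∧ b.repr < omega0 ^ c := by
  have hb : b.repr < omega0 ^ e₁.repr := hβ.snd'.repr_lt
  have hcm : omega0 ^ c ≤ omega0 ^ c * m := by
    conv_lhs => rw [← mul_one (omega0 ^ c)]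
    exact mul_le_mul_right (by exact_mod_cast Nat.one_le_iff_ne_zero.2 hm.ne') _
  have hec : e₁.repr = c := by
    have h1 : e₁.repr < c + 1 := by
      rw [← opow_lt_opow_iff_right one_lt_omega0 (a := omega0)]
      have hsucc : omega0 ^ (c + 1) = omega0 ^ c * omega0 := by
        rw [← opow_succ]; rfl
      rw [hsucc]
      calc omega0 ^ e₁.repr ≤ (ONote.oadd e₁ n₁ b).repr := ONote.omega0_le_oadd _ _ _
        _ < omega0 ^ c * (m + 1) := hlt
        _ ≤ omega0 ^ c * omega0 :=
            mul_le_mul_right (le_of_lt (by exact_mod_cast nat_lt_omega0 (m+1))) _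
    have h2 : c < e₁.repr + 1 := by
      rw [← opow_lt_opow_iff_right one_lt_omega0 (a := omega0)]
      calc omega0 ^ c ≤ omega0 ^ c * m := hcm
        _ ≤ (ONote.oadd e₁ n₁ b).repr := hge
        _ < omega0 ^ (e₁.repr + 1) := oadd_repr_lt_opow_succ _ _ _ hβ
    exact le_antisymm (Order.lt_add_one_iff.1 h1) (Order.lt_add_one_iff.1 h2)
  subst hec
  have hpos : (0:Ordinal) < omega0 ^ e₁.repr := opow_pos _ omega0_pos
  have hn1 : (n₁ : ℕ) = m := by
    have h1 : ((n₁:ℕ):Ordinal) < (m:Ordinal) + 1 := by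
      rw [← mul_lt_mul_iff_right₀ hpos]
      calc omega0 ^ e₁.repr * (n₁:ℕ) ≤ (ONote.oadd e₁ n₁ b).repr := le_add_right le_rfl
        _ < _ := hlt
    have h2 : (m:Ordinal) < ((n₁:ℕ):Ordinal) + 1 := by
      rw [← mul_lt_mul_iff_right₀ hpos]
      calc omega0 ^ e₁.repr * m ≤ (ONote.oadd e₁ n₁ b).repr := hge
        _ < _ := oadd_repr_lt _ _ _ hβ
    have h1' : (n₁ : ℕ) < m + 1 := by exact_mod_cast h1
    have h2' : m < (n₁ : ℕ) + 1 := by exact_mod_cast h2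
    omega
  exact ⟨rfl, hn1, hb⟩

/-- The coefficient bound lemma. -/
lemma lt_opow_mul {β : ONote} (hβ : β.NF) {c : Ordinal} {x : ℕ}
    (h : β.repr < omega0 ^ (c + 1)) (hx : mc β + 1 ≤ x) :
    β.repr < omega0 ^ c * x := by
  cases β with
  | zero =>
    show (0:Ordinal) < _
    have : 0 < x := by omega
    exact mul_pos (opow_pos _ omega0_pos) (by exact_mod_cast this)
  | oadd e₁ n₁ b =>
    have hec : e₁.repr ≤ c := by
      have : omega0 ^ e₁.repr < omega0 ^ (c + 1) :=
        lt_of_le_of_lt (ONote.omega0_le_oadd _ _ _) h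
      exact Order.lt_add_one_iff.1 ((opow_lt_opow_iff_right one_lt_omega0).1 this)
    have hn : (n₁ : ℕ) + 1 ≤ x := by
      have : (n₁ : ℕ) ≤ mc (ONote.oadd e₁ n₁ b) := by simp [mc]
      omega
    calc (ONote.oadd e₁ n₁ b).repr < omega0 ^ e₁.repr * ((n₁:ℕ) + 1) := oadd_repr_lt _ _ _ hβ
      _ ≤ omega0 ^ c * x := by
          apply mul_le_mul' (opow_le_opow_right omega0_pos hec)
          exact_mod_cast Nat.cast_le.2 hn

end FGH


lemma FGH.mc_fst_le (e : ONote) (n : ℕ+) (a : ONote) : mc e ≤ mc (ONote.oadd e n a) := by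
  simp [mc]

lemma FGH.mc_snd_le (e : ONote) (n : ℕ+) (a : ONote) : mc a ≤ mc (ONote.oadd e n a) := by
  simp [mc]


open FGH

theorem stmt8 (γ : ONote) (hγ : γ.NF) (hlim : IsLim γ) (β : ONote) (hβ : β.NF)
    (h : β.repr < γ.repr) (x : ℕ) (hx : mc β + 1 ≤ x) :
    β.repr < (fundSeq γ x).repr := by
  induction γ generalizing β with
  | zero =>
    have : Order.IsSuccLimit (0:Ordinal) := isLim_iff_repr.1 hlim
    exact absurd this.pos (lt_irrefl 0)
  | oadd e n a ihe iha =>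
    cases a with
    | oadd e₂ n₂ a₂ =>
      set a := ONote.oadd e₂ n₂ a₂ with ha
      have hfs : fundSeq (ONote.oadd e n a) x = ONote.oadd e n (fundSeq a x) := by
        rw [ha]; rfl
      rw [hfs]
      show β.repr < omega0 ^ e.repr * (n:ℕ) + (fundSeq a x).repr
      rcases lt_or_ge β.repr (omega0 ^ e.repr * (n:ℕ)) with hc | hc
      · exact hc.trans_le (le_add_right le_rfl)
      · -- decompose β
        cases β with
        | zero =>
          have : (0:Ordinal) < omega0 ^ e.repr * (n:ℕ) :=
            mul_pos (opow_pos _ omega0_pos) (by exact_mod_cast n.pos)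
          exact absurd hc (not_le.2 this)
        | oadd e₁ n₁ b =>
          have hae : a.repr < omega0 ^ e.repr := hγ.snd'.repr_lt
          have hlt2 : (ONote.oadd e₁ n₁ b).repr < omega0 ^ e.repr * ((n:ℕ) + 1) := by
            calc (ONote.oadd e₁ n₁ b).repr < (ONote.oadd e n a).repr := h
              _ = omega0 ^ e.repr * (n:ℕ) + a.repr := rfl
              _ < omega0 ^ e.repr * (n:ℕ) + omega0 ^ e.repr := (add_lt_add_iff_left _).2 hae
              _ = omega0 ^ e.repr * ((n:ℕ) + 1) := by rw [mul_add_one]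
          obtain ⟨hE, hN, hb⟩ := sandwich hβ n.pos hc hlt2
          have hba : b.repr < a.repr := by
            have : omega0 ^ e.repr * (n:ℕ) + b.repr < omega0 ^ e.repr * (n:ℕ) + a.repr := by
              calc omega0 ^ e.repr * (n:ℕ) + b.repr
                  = omega0 ^ e₁.repr * (n₁:ℕ) + b.repr := by rw [hE, hN]
                _ = (ONote.oadd e₁ n₁ b).repr := rfl
                _ < (ONote.oadd e n a).repr := h
                _ = omega0 ^ e.repr * (n:ℕ) + a.repr := rfl
            exact (add_lt_add_iff_left _).1 this
          have halim : IsLim a := by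
            have hl : Order.IsSuccLimit ((ONote.oadd e n a).repr) := isLim_iff_repr.1 hlim
            have : Order.IsSuccLimit (omega0 ^ e.repr * (n:ℕ) + a.repr) := hl
            rcases Ordinal.isSuccLimit_add_iff.1 this with h' | ⟨h0, _⟩
            · exact isLim_iff_repr.2 h'
            · exact absurd h0 (oadd_repr_pos e₂ n₂ a₂).ne'
          have hmb : mc b + 1 ≤ x := by
            have h1 : mc b ≤ mc (ONote.oadd e₁ n₁ b) := mc_snd_le _ _ _
            omega
          have := iha hγ.snd halim b hβ.snd hba hmb
          calc (ONote.oadd e₁ n₁ b).repr = omega0 ^ e.repr * (n:ℕ) + b.repr := by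
                rw [show (ONote.oadd e₁ n₁ b).repr = omega0 ^ e₁.repr * (n₁:ℕ) + b.repr from rfl,
                  hE, hN]
            _ < omega0 ^ e.repr * (n:ℕ) + (fundSeq a x).repr := (add_lt_add_iff_left _).2 this
    | zero =>
      have hγr : (ONote.oadd e n ONote.zero).repr = omega0 ^ e.repr * (n:ℕ) := by
        show omega0 ^ e.repr * (n:ℕ) + 0 = _
        rw [add_zero]
      have he0 : e ≠ ONote.zero := by
        rintro rfl
        have hl : Order.IsSuccLimit ((ONote.oadd ONote.zero n ONote.zero).repr) := isLim_iff_repr.1 hlim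
        rw [hγr] at hl
        have : ((n:ℕ):Ordinal) < ω := nat_lt_omega0 _
        simp only [ONote.repr, opow_zero, one_mul] at hl
        exact absurd (omega0_le_of_isSuccLimit hl) (not_le.2 this)
      have hx0 : 0 < x := by omega
      -- tail analysis
      rcases hp : predO e with _ | e'
      -- none case: e is a limit
      case none =>
        have hel : IsLim e := isLim_iff_repr.2 (predO_eq_none hγ.fst he0 hp)
        have hfs : fundSeq (ONote.oadd e n ONote.zero) x =
            if h : 1 < (n : ℕ) then
              ONote.oadd e ⟨(n : ℕ) - 1, by omega⟩ (ONote.oadd (fundSeq e x) 1 ONote.zero)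
            else ONote.oadd (fundSeq e x) 1 ONote.zero := by
          simp only [fundSeq, hp]
        have key : ∀ β' : ONote, β'.NF → β'.repr < omega0 ^ e.repr → mc β' + 1 ≤ x →
            β'.repr < (ONote.oadd (fundSeq e x) 1 ONote.zero).repr := by
          intro β' hβ' hlt' hx'
          show β'.repr < omega0 ^ (fundSeq e x).repr * (1:ℕ) + 0
          rw [add_zero, Nat.cast_one, mul_one]
          cases β' with
          | zero => exact opow_pos _ omega0_pos
          | oadd e₁ n₁ b =>
            have he₁ : e₁.repr < e.repr := by
              have : omega0 ^ e₁.repr < omega0 ^ e.repr :=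
                lt_of_le_of_lt (ONote.omega0_le_oadd _ _ _) hlt'
              exact (opow_lt_opow_iff_right one_lt_omega0).1 this
            have hmc : mc e₁ + 1 ≤ x := by
              have := mc_fst_le e₁ n₁ b; omega
            have hfe := ihe hγ.fst hel e₁ hβ'.fst he₁ hmc
            calc (ONote.oadd e₁ n₁ b).repr < omega0 ^ (e₁.repr + 1) :=
                oadd_repr_lt_opow_succ _ _ _ hβ'
              _ ≤ omega0 ^ (fundSeq e x).repr :=
                opow_le_opow_right omega0_pos (Order.add_one_le_iff.2 hfe)
        rw [hfs]
        by_cases hn : 1 < (n:ℕ)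
        · rw [dif_pos hn]
          show β.repr < omega0 ^ e.repr * ((n:ℕ) - 1 : ℕ) +
            (ONote.oadd (fundSeq e x) 1 ONote.zero).repr
          rcases lt_or_ge β.repr (omega0 ^ e.repr * ((n:ℕ) - 1 : ℕ)) with hc | hc
          · exact hc.trans_le (le_add_right le_rfl)
          · cases β with
            | zero =>
              have : (0:Ordinal) < omega0 ^ e.repr * ((n:ℕ) - 1 : ℕ) :=
                mul_pos (opow_pos _ omega0_pos) (by exact_mod_cast (by omega : 0 < (n:ℕ)-1))
              exact absurd hc (not_le.2 this)
            | oadd e₁ n₁ b =>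
              have hlt2 : (ONote.oadd e₁ n₁ b).repr <
                  omega0 ^ e.repr * (((n:ℕ) - 1 : ℕ) + 1) := by
                have : (((n:ℕ) - 1 : ℕ) : Ordinal) + 1 = ((n:ℕ) : Ordinal) := by
                  have : ((n:ℕ) - 1 : ℕ) + 1 = (n:ℕ) := by omega
                  exact_mod_cast congrArg (fun k : ℕ => (k : Ordinal.{0})) this
                rw [this, ← hγr]
                exact h
              obtain ⟨hE, hN, hb⟩ := sandwich hβ (by omega) hc hlt2
              have hbk := key b hβ.snd (hE ▸ hb) (by have := mc_snd_le e₁ n₁ b; omega)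
              calc (ONote.oadd e₁ n₁ b).repr
                  = omega0 ^ e.repr * ((n:ℕ) - 1 : ℕ) + b.repr := by
                    rw [show (ONote.oadd e₁ n₁ b).repr
                      = omega0 ^ e₁.repr * (n₁:ℕ) + b.repr from rfl, hE, hN]
                _ < _ := (add_lt_add_iff_left _).2 hbk
        · rw [dif_neg hn]
          apply key β hβ _ hx
          have hn1 : (n:ℕ) = 1 := by have := n.pos; omega
          rw [hγr, hn1] at h
          simpa using h
      -- some case: e = e' + 1
      case some =>
        have hE := predO_eq_some hγ.fst hp
        have hfs : fundSeq (ONote.oadd e n ONote.zero) x =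
            if h : 1 < (n : ℕ) then
              ONote.oadd e ⟨(n : ℕ) - 1, by omega⟩ (ONote.oadd e' ⟨x, hx0⟩ ONote.zero)
            else ONote.oadd e' ⟨x, hx0⟩ ONote.zero := by
          simp only [fundSeq, hp, dif_pos hx0]
        have key : ∀ β' : ONote, β'.NF → β'.repr < omega0 ^ e.repr → mc β' + 1 ≤ x →
            β'.repr < (ONote.oadd e' ⟨x, hx0⟩ ONote.zero).repr := by
          intro β' hβ' hlt' hx'
          show β'.repr < omega0 ^ e'.repr * ((⟨x, hx0⟩ : ℕ+) : ℕ) + 0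
          rw [add_zero]
          have : ((⟨x, hx0⟩ : ℕ+) : ℕ) = x := rfl
          rw [this]
          exact lt_opow_mul hβ' (by rw [← hE]; exact hlt') hx'
        rw [hfs]
        by_cases hn : 1 < (n:ℕ)
        · rw [dif_pos hn]
          show β.repr < omega0 ^ e.repr * ((n:ℕ) - 1 : ℕ) +
            (ONote.oadd e' ⟨x, hx0⟩ ONote.zero).repr
          rcases lt_or_ge β.repr (omega0 ^ e.repr * ((n:ℕ) - 1 : ℕ)) with hc | hc
          · exact hc.trans_le (le_add_right le_rfl)
          · cases β with
            | zero =>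
              have : (0:Ordinal) < omega0 ^ e.repr * ((n:ℕ) - 1 : ℕ) :=
                mul_pos (opow_pos _ omega0_pos) (by exact_mod_cast (by omega : 0 < (n:ℕ)-1))
              exact absurd hc (not_le.2 this)
            | oadd e₁ n₁ b =>
              have hlt2 : (ONote.oadd e₁ n₁ b).repr <
                  omega0 ^ e.repr * (((n:ℕ) - 1 : ℕ) + 1) := by
                have : (((n:ℕ) - 1 : ℕ) : Ordinal) + 1 = ((n:ℕ) : Ordinal) := by
                  have : ((n:ℕ) - 1 : ℕ) + 1 = (n:ℕ) := by omega
                  exact_mod_cast congrArg (fun k : ℕ => (k : Ordinal.{0})) this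
                rw [this, ← hγr]
                exact h
              obtain ⟨hE, hN, hb⟩ := sandwich hβ (by omega) hc hlt2
              have hbk := key b hβ.snd (hE ▸ hb) (by have := mc_snd_le e₁ n₁ b; omega)
              calc (ONote.oadd e₁ n₁ b).repr
                  = omega0 ^ e.repr * ((n:ℕ) - 1 : ℕ) + b.repr := by
                    rw [show (ONote.oadd e₁ n₁ b).repr
                      = omega0 ^ e₁.repr * (n₁:ℕ) + b.repr from rfl, hE, hN]
                _ < _ := (add_lt_add_iff_left _).2 hbk
        · rw [dif_neg hn]
          apply key β hβ _ hx
          have hn1 : (n:ℕ) = 1 := by have := n.pos; omega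
          rw [hγr, hn1] at h
          simpa using h
end

section
/- For every natural number d and every ordinal β < ω_d (the tower of ω's of height d), mc(β) is well defined and β < ω^{ω_{d-1}}; moreover for any limit γ with β < γ < ω_d, γ[mc(β)+1] > β. (This is the statement provable by Π⁰₁-induction on d.) -/
open Ordinal

open FGH

/-!
Fix `m ≥ mc β`. By induction on the non-successor notation `γ`, every normal form `β < γ`
with maximal coefficient at most `m` lies below `γ[m+1]`. For `γ = ω^e·n + a` with `a ≠ 0`,
or `γ = ω^e·(n+1) = ω^e·n + ω^e`, the Cantor normal forms of `β` and `γ` agree up to a tail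
below the last summand, so only the tail needs the fundamental sequence. For `γ = ω^(e'+1)`,
the coefficients of `β` give `β < ω^e'·(m+1) = γ[m+1]`; for `γ = ω^λ` with `λ` a limit, the
leading exponent of `β` is below `λ` and its coefficients are at most `m`, so by induction it
is below `λ[m+1]`, whence `β < ω^(λ[m+1]) = γ[m+1]`.
-/

namespace FGH

open ONote

theorem repr_add_one_of_predO_eq_some :
    ∀ {α b : ONote}, predO α = some b → b.repr + 1 = α.repr
  | ONote.zero, _, h => by simp [predO] at h
  | ONote.oadd e n (ONote.oadd e₁ n₁ a₁), _, h => by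
    obtain ⟨b', hb', rfl⟩ := Option.map_eq_some_iff.1 h
    simp [add_assoc, repr_add_one_of_predO_eq_some hb']
  | ONote.oadd (ONote.oadd _ _ _) _ ONote.zero, _, h => by simp [predO] at h
  | ONote.oadd ONote.zero n ONote.zero, _, h => by
    simp only [predO] at h
    split at h
    · cases h; simp_all
    · rename_i k hk
      cases h
      simp only [ONote.repr, hk, opow_zero, one_mul, add_zero]
      rw [PNat.mk_coe]
      push_cast
      rfl
    · cases h

theorem predO_eq_none_of_isLim {γ : ONote} (hγ : IsLim γ) : predO γ = none := by
  rcases h : predO γ with _ | b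
  · rfl
  · have hb := repr_add_one_of_predO_eq_some h
    have := hγ.2 b.repr (hb ▸ lt_add_one _)
    rw [Order.succ_eq_add_one, hb] at this
    exact absurd this (lt_irrefl _)

theorem predO_oadd_zero_zero_ne_none (n : ℕ+) :
    predO (oadd ONote.zero n ONote.zero) ≠ none := by
  simp only [predO]
  split <;> simp_all

theorem fundSeq_oadd_zero (e : ONote) (n : ℕ+) (x : ℕ) :
    fundSeq (oadd e n ONote.zero) x = if h : 1 < (n : ℕ) then
      oadd e ⟨(n : ℕ) - 1, by omega⟩ (fundSeq (oadd e 1 ONote.zero) x)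
    else fundSeq (oadd e 1 ONote.zero) x := by
  by_cases h : 1 < (n : ℕ) <;> simp [fundSeq, h]

theorem fundSeq_omega0_opow_of_predO_eq_some {e e' : ONote} (he : predO e = some e') (m : ℕ) :
    fundSeq (oadd e 1 ONote.zero) (m + 1) = oadd e' m.succPNat ONote.zero := by
  simp [fundSeq, he]; rfl

theorem fundSeq_omega0_opow_of_predO_eq_none {e : ONote} (he : predO e = none) (x : ℕ) :
    fundSeq (oadd e 1 ONote.zero) x = oadd (fundSeq e x) 1 ONote.zero := by
  simp [fundSeq, he]

theorem repr_lt_opow_mul_add_one {e a : ONote} {n : ℕ+} (h : (oadd e n a).NF) :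
    (oadd e n a).repr < ω ^ e.repr * ((n : ℕ) + 1) := by
  rw [mul_add_one, ONote.repr]
  gcongr
  exact h.snd'.repr_lt

theorem repr_lt_of_oadd_lt_opow {e a : ONote} {n : ℕ+} {b : Ordinal}
    (h : (oadd e n a).repr < ω ^ b) : e.repr < b :=
  (opow_lt_opow_iff_right one_lt_omega0).1 ((omega0_le_oadd e n a).trans_lt h)

theorem opow_mul_add_le {E A : Ordinal} (hA : A ≤ ω ^ E) (k : ℕ) :
    ω ^ E * k + A ≤ ω ^ E * (k + 1 : ℕ) := by
  rw [Nat.cast_succ, mul_add_one]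
  gcongr

def Dominates (m : ℕ) (A B : Ordinal) : Prop :=
  ∀ β : ONote, β.NF → mc β ≤ m → β.repr < A → β.repr < B

theorem dominates_opow_add_one (m : ℕ) (E : Ordinal) :
    Dominates m (ω ^ (E + 1)) (ω ^ E * (m + 1)) := by
  rintro (_ | ⟨e, n, a⟩) hβ hm hlt
  · exact mul_pos (opow_pos _ omega0_pos) (by exact_mod_cast m.succ_pos)
  · simp only [mc, max_le_iff] at hm
    have he : e.repr ≤ E := Order.lt_add_one_iff.1 (repr_lt_of_oadd_lt_opow hlt)
    calc (oadd e n a).repr < ω ^ e.repr * ((n : ℕ) + 1) := repr_lt_opow_mul_add_one hβ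
      _ ≤ ω ^ E * (m + 1) := by
        gcongr
        · exact omega0_pos
        · exact_mod_cast hm.1.2

theorem Dominates.opow {m : ℕ} {E E' : Ordinal} (h : Dominates m E E') :
    Dominates m (ω ^ E) (ω ^ E') := by
  rintro (_ | ⟨e, n, a⟩) hβ hm hlt
  · exact opow_pos _ omega0_pos
  · simp only [mc, max_le_iff] at hm
    exact (hβ.below_of_lt (h e hβ.fst hm.1.1 (repr_lt_of_oadd_lt_opow hlt))).repr_lt

theorem Dominates.opow_mul_add {m : ℕ} {A B E : Ordinal} (h : Dominates m A B) (hA : A ≤ ω ^ E)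
    (k : ℕ) : Dominates m (ω ^ E * k + A) (ω ^ E * k + B) := by
  rcases Nat.eq_zero_or_pos k with rfl | hk
  · simpa using h
  have hpos : 0 < ω ^ E * k := mul_pos (opow_pos _ omega0_pos) (by exact_mod_cast hk)
  rintro (_ | ⟨e, n, a⟩) hβ hm hlt
  · exact hpos.trans_le le_self_add
  simp only [mc, max_le_iff] at hm
  rcases lt_trichotomy e.repr E with he | rfl | he
  · calc (oadd e n a).repr < ω ^ E := (hβ.below_of_lt he).repr_lt
      _ ≤ ω ^ E * k := le_mul_of_one_le_right' (by exact_mod_cast hk)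
      _ ≤ _ := le_self_add
  · rcases lt_trichotomy (n : ℕ) k with hn | hn | hn
    · calc (oadd e n a).repr < ω ^ e.repr * ((n : ℕ) + 1) := repr_lt_opow_mul_add_one hβ
        _ ≤ ω ^ e.repr * k := by gcongr; exact_mod_cast hn
        _ ≤ _ := le_self_add
    · rw [ONote.repr, hn] at hlt ⊢
      gcongr
      exact h a hβ.snd hm.2 (lt_of_add_lt_add_left hlt)
    · refine absurd hlt (not_lt.2 ?_)
      calc ω ^ e.repr * k + A ≤ ω ^ e.repr * (k + 1 : ℕ) := opow_mul_add_le hA k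
        _ ≤ ω ^ e.repr * (n : ℕ) := by gcongr; exact hn
        _ ≤ (oadd e n a).repr := le_self_add
  · refine absurd hlt (not_lt.2 (le_of_lt ?_))
    calc ω ^ E * k + A ≤ ω ^ E * (k + 1 : ℕ) := opow_mul_add_le hA k
      _ < ω ^ E * ω := mul_lt_mul_of_pos_left (natCast_lt_omega0 _) (opow_pos _ omega0_pos)
      _ = ω ^ (E + 1) := (opow_add_one _ _).symm
      _ ≤ ω ^ e.repr := opow_le_opow_right omega0_pos (Order.add_one_le_of_lt he)
      _ ≤ (oadd e n a).repr := omega0_le_oadd e n a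

theorem Dominates.oadd_zero {m : ℕ} {e : ONote}
    (h : Dominates m (ω ^ e.repr) (fundSeq (oadd e 1 ONote.zero) (m + 1)).repr) (n : ℕ+) :
    Dominates m (oadd e n ONote.zero).repr (fundSeq (oadd e n ONote.zero) (m + 1)).repr := by
  have hn : (((n : ℕ) - 1 : ℕ) : Ordinal) + 1 = n := by
    exact_mod_cast Nat.sub_add_cancel n.pos
  have hγ : (oadd e n ONote.zero).repr = ω ^ e.repr * ((n : ℕ) - 1 : ℕ) + ω ^ e.repr := by
    rw [ONote.repr, ← hn, mul_add_one]; exact add_zero _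
  rw [fundSeq_oadd_zero, hγ]
  split_ifs with h1
  · exact h.opow_mul_add le_rfl _
  · have hn1 : (n : ℕ) = 1 := by have := n.pos; omega
    simpa [hn1] using h

theorem dominates_fundSeq_of_predO_eq_none (m : ℕ) :
    ∀ γ : ONote, γ.NF → predO γ = none → Dominates m γ.repr (fundSeq γ (m + 1)).repr
  | ONote.zero, _, _ => fun _ _ _ h => absurd h zero_le.not_gt
  | ONote.oadd e n (ONote.oadd e₁ n₁ a₁), hγ, hp =>
    (dominates_fundSeq_of_predO_eq_none m _ hγ.snd (Option.map_eq_none_iff.1 hp)).opow_mul_add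
      hγ.snd'.repr_lt.le n
  | ONote.oadd ONote.zero n ONote.zero, _, hp => absurd hp (predO_oadd_zero_zero_ne_none n)
  | ONote.oadd (ONote.oadd e₁ n₁ a₁) n ONote.zero, hγ, _ => by
    set e := oadd e₁ n₁ a₁
    have hT : Dominates m (ω ^ e.repr) (fundSeq (oadd e 1 ONote.zero) (m + 1)).repr := by
      rcases he : predO e with _ | e'
      · rw [fundSeq_omega0_opow_of_predO_eq_none he]
        simpa using (dominates_fundSeq_of_predO_eq_none m e hγ.fst he).opow
      · rw [fundSeq_omega0_opow_of_predO_eq_some he, ← repr_add_one_of_predO_eq_some he]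
        simpa using dominates_opow_add_one m e'.repr
    exact hT.oadd_zero n

end FGH

open FGH

theorem stmt12 (d : ℕ) (β : ONote) (hβ : β.NF) (hlt : β.repr < (omegaTower d).repr) :
    (∀ e, d = e + 1 → β.repr < (ONote.oadd (omegaTower e) 1 ONote.zero).repr)
    ∧ ∀ γ : ONote, γ.NF → IsLim γ → β.repr < γ.repr → γ.repr < (omegaTower d).repr →
        β.repr < (fundSeq γ (mc β + 1)).repr := by
  refine ⟨by rintro e rfl; exact hlt, fun γ hγ hlim hβγ _ => ?_⟩
  exact dominates_fundSeq_of_predO_eq_none _ γ hγ (predO_eq_none_of_isLim hlim) β hβ le_rfl hβγ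
end
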